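/- arXiv:1210.3111 — 6 statements merged into one kernel-verified Lean document; each statement's English description precedes it below -/
import Mathlib

section
/- Let M ⊂ ℝ^m be a compact set and let π be a fixed (m−1)-dimensional linear subspace of ℝ^m with chosen unit normal e (so π = e^⊥). Suppose there exist δ > 0 and α > 0 such that for every x ∈ M one has (B_δ(x) ∩ M) ∩ (x + C_α(π)) = ∅. Then there exist N ∈ ℕ, Lipschitz maps f_i : ℝ^{m−1} → ℝ^m for i ∈ {1,…,N}, and compact sets K_i ⊂ ℝ^{m−1} such that M = ⋃_{i=1}^N f_i(K_i); in particular, the (m−1)-dimensional Hausdorff measure of M is finite: H^{m−1}(M) < ∞. -/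
open Metric Set MeasureTheory RealInnerProductSpace NNReal
open scoped ENNReal

/-- If a compact set `M ⊂ ℝ^m` avoids, near each of its points, a fixed open
cone `C_α(π)` (with `π = e^⊥` for a fixed unit vector `e`), then `M` is a finite union of
Lipschitz images of compact subsets of `ℝ^{m-1}`; in particular `H^{m-1}(M) < ∞`. -/
theorem cone_avoidance_rectifiable_fixed_plane
    (m : ℕ) (M : Set (EuclideanSpace ℝ (Fin m))) (hM : IsCompact M)
    (e : EuclideanSpace ℝ (Fin m)) (he : ‖e‖ = 1)
    (δ α : ℝ) (hδ : 0 < δ) (hα : 0 < α)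
    (hcone : ∀ x ∈ M,
      (Metric.ball x δ ∩ M) ∩
        {y | α * ‖(y - x) - ⟪y - x, e⟫ • e‖ < ⟪y - x, e⟫} = ∅) :
    (∃ (N : ℕ) (f : Fin N → (EuclideanSpace ℝ (Fin (m - 1)) → EuclideanSpace ℝ (Fin m)))
        (K : Fin N → Set (EuclideanSpace ℝ (Fin (m - 1)))),
        (∀ i, ∃ L : ℝ≥0, LipschitzWith L (f i)) ∧ (∀ i, IsCompact (K i)) ∧
        M = ⋃ i, f i '' K i) ∧
      μH[(m : ℝ) - 1] M < ⊤ := by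
  classical
  rcases Nat.eq_zero_or_pos m with hm0 | hm
  · exfalso
    subst hm0
    rw [EuclideanSpace.norm_eq] at he
    simp at he
  have he0 : e ≠ 0 := by
    intro h; rw [h, norm_zero] at he; exact one_ne_zero he.symm
  haveI hfact : Fact (Module.finrank ℝ (EuclideanSpace ℝ (Fin m)) = (m - 1) + 1) :=
    ⟨by rw [finrank_euclideanSpace_fin]; omega⟩
  let φ : ((ℝ ∙ e)ᗮ : Submodule ℝ (EuclideanSpace ℝ (Fin m))) ≃ₗᵢ[ℝ] EuclideanSpace ℝ (Fin (m - 1)) :=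
    (OrthonormalBasis.fromOrthogonalSpanSingleton (𝕜 := ℝ) (m - 1) he0).repr
  have hee : ⟪e, e⟫ = 1 := by rw [real_inner_self_eq_norm_sq, he]; norm_num
  have hQmem : ∀ z : EuclideanSpace ℝ (Fin m), z - ⟪z, e⟫ • e ∈ (ℝ ∙ e)ᗮ := by
    intro z
    rw [Submodule.mem_orthogonal_singleton_iff_inner_right]
    rw [inner_sub_right, real_inner_smul_right, hee, mul_one, real_inner_comm, sub_self]
  set p : EuclideanSpace ℝ (Fin m) → EuclideanSpace ℝ (Fin (m - 1)) := fun z => φ ⟨z - ⟪z, e⟫ • e, hQmem z⟩ with hpdef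
  have hQsub : ∀ y x : EuclideanSpace ℝ (Fin m), (y - ⟪y, e⟫ • e) - (x - ⟪x, e⟫ • e) = (y - x) - ⟪y - x, e⟫ • e := by
    intro y x; rw [inner_sub_left, sub_smul]; abel
  have hp : ∀ y x : EuclideanSpace ℝ (Fin m), ‖p y - p x‖ = ‖(y - x) - ⟪y - x, e⟫ • e‖ := by
    intro y x
    have h1 : p y - p x = φ ⟨(y - x) - ⟪y - x, e⟫ • e, hQmem _⟩ := by
      rw [hpdef, ← map_sub]
      congr 1
      apply Subtype.ext
      push_cast
      exact hQsub y x
    rw [h1, φ.norm_map]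
    rfl
  have hpyth : ∀ z : EuclideanSpace ℝ (Fin m), ‖z‖ ^ 2 = ⟪z, e⟫ ^ 2 + ‖z - ⟪z, e⟫ • e‖ ^ 2 := by
    intro z
    have h0 : ⟪⟪z, e⟫ • e, z - ⟪z, e⟫ • e⟫ = 0 := by
      rw [real_inner_smul_left, inner_sub_right, real_inner_smul_right, hee, mul_one,
        real_inner_comm e z]
      ring
    have hz : z = ⟪z, e⟫ • e + (z - ⟪z, e⟫ • e) := by abel
    calc ‖z‖ ^ 2 = ‖⟪z, e⟫ • e + (z - ⟪z, e⟫ • e)‖ ^ 2 := by rw [← hz]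
      _ = ‖⟪z, e⟫ • e‖ ^ 2 + 2 * ⟪⟪z, e⟫ • e, z - ⟪z, e⟫ • e⟫ + ‖z - ⟪z, e⟫ • e‖ ^ 2 :=
        norm_add_sq_real _ _
      _ = ⟪z, e⟫ ^ 2 + ‖z - ⟪z, e⟫ • e‖ ^ 2 := by
        rw [h0, norm_smul, he, Real.norm_eq_abs]
        rw [mul_one, sq_abs]
        ring
  -- cone condition gives two-sided bound
  have hkey : ∀ x ∈ M, ∀ y ∈ M, dist y x < δ →
      |⟪y - x, e⟫| ≤ α * ‖(y - x) - ⟪y - x, e⟫ • e‖ := by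
    intro x hx y hy hxy
    have hQflip : ‖(x - y) - ⟪x - y, e⟫ • e‖ = ‖(y - x) - ⟪y - x, e⟫ • e‖ := by
      have : (x - y) - ⟪x - y, e⟫ • e = -((y - x) - ⟪y - x, e⟫ • e) := by
        rw [show x - y = -(y - x) by abel, inner_neg_left, neg_smul]; abel
      rw [this, norm_neg]
    rw [abs_le]
    constructor
    · by_contra hcon
      push_neg at hcon
      have hxmem : x ∈ (Metric.ball y δ ∩ M) ∩
          {z | α * ‖(z - y) - ⟪z - y, e⟫ • e‖ < ⟪z - y, e⟫} := by
        refine ⟨⟨?_, hx⟩, ?_⟩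
        · rw [mem_ball, dist_comm]; exact hxy
        · show α * ‖(x - y) - ⟪x - y, e⟫ • e‖ < ⟪x - y, e⟫
          rw [hQflip, show x - y = -(y - x) by abel, inner_neg_left]
          linarith
      rw [hcone y hy] at hxmem
      exact hxmem
    · by_contra hcon
      push_neg at hcon
      have hymem : y ∈ (Metric.ball x δ ∩ M) ∩
          {z | α * ‖(z - x) - ⟪z - x, e⟫ • e‖ < ⟪z - x, e⟫} := by
        exact ⟨⟨mem_ball.2 hxy, hy⟩, hcon⟩
      rw [hcone x hx] at hymem
      exact hymem
  set C : ℝ := Real.sqrt (1 + α ^ 2) with hCdef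
  have hC0 : 0 ≤ C := Real.sqrt_nonneg _
  have hdistb : ∀ x ∈ M, ∀ y ∈ M, dist y x < δ → ‖y - x‖ ≤ C * ‖p y - p x‖ := by
    intro x hx y hy hxy
    have h1 := hkey x hx y hy hxy
    have h2 : ⟪y - x, e⟫ ^ 2 ≤ α ^ 2 * ‖(y - x) - ⟪y - x, e⟫ • e‖ ^ 2 := by
      have h2' : |⟪y - x, e⟫| ^ 2 ≤ (α * ‖(y - x) - ⟪y - x, e⟫ • e‖) ^ 2 := by
        have := abs_nonneg ⟪y - x, e⟫
        nlinarith
      rw [sq_abs] at h2'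
      nlinarith [h2']
    have h3 : ‖y - x‖ ^ 2 ≤ (1 + α ^ 2) * ‖(y - x) - ⟪y - x, e⟫ • e‖ ^ 2 := by
      rw [hpyth (y - x)]; nlinarith
    rw [hp]
    calc ‖y - x‖ = Real.sqrt (‖y - x‖ ^ 2) := (Real.sqrt_sq (norm_nonneg _)).symm
      _ ≤ Real.sqrt ((1 + α ^ 2) * ‖(y - x) - ⟪y - x, e⟫ • e‖ ^ 2) := Real.sqrt_le_sqrt h3
      _ = C * ‖(y - x) - ⟪y - x, e⟫ • e‖ := by
        rw [Real.sqrt_mul (by positivity), Real.sqrt_sq (norm_nonneg _)]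
  -- p is 1-Lipschitz, hence continuous
  have hplip : LipschitzWith 1 p := by
    apply LipschitzWith.of_dist_le_mul
    intro y x
    rw [NNReal.coe_one, one_mul, dist_eq_norm, dist_eq_norm, hp]
    have h := hpyth (y - x)
    nlinarith [sq_nonneg ⟪y - x, e⟫, norm_nonneg (y - x),
      norm_nonneg ((y - x) - ⟪y - x, e⟫ • e), sq_nonneg (‖y - x‖ + ‖(y - x) - ⟪y - x, e⟫ • e‖)]
  -- finite cover by balls of radius δ/3
  obtain ⟨t, ht⟩ := hM.elim_finite_subcover (fun x : M => Metric.ball (x : EuclideanSpace ℝ (Fin m)) (δ / 3))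
    (fun x => isOpen_ball) (fun x hx => mem_iUnion.2 ⟨⟨x, hx⟩, mem_ball_self (by positivity)⟩)
  set N := t.card with hN
  set c : Fin N → EuclideanSpace ℝ (Fin m) := fun i => ((t.equivFin.symm i : t) : M) with hc
  have hcM : ∀ i, (c i) ∈ M := fun i => ((t.equivFin.symm i : t) : M).2
  set S : Fin N → Set (EuclideanSpace ℝ (Fin m)) := fun i => M ∩ Metric.closedBall (c i) (δ / 3) with hS
  have hScomp : ∀ i, IsCompact (S i) := fun i => hM.inter_right Metric.isClosed_closedBall
  have hSM : ∀ i, S i ⊆ M := fun i => inter_subset_left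
  -- on each piece, points are δ-close
  have hSclose : ∀ i, ∀ y ∈ S i, ∀ z ∈ S i, dist y z < δ := by
    intro i y hy z hz
    calc dist y z ≤ dist y (c i) + dist z (c i) := dist_triangle_right _ _ _
      _ ≤ δ / 3 + δ / 3 := add_le_add hy.2 hz.2
      _ < δ := by linarith
  have hSbound : ∀ i, ∀ y ∈ S i, ∀ z ∈ S i, ‖y - z‖ ≤ C * ‖p y - p z‖ := fun i y hy z hz =>
    hdistb z (hSM i hz) y (hSM i hy) (hSclose i y hy z hz)
  -- selection: partial inverse of p on S i
  have hsel : ∀ (i : Fin N) (w : EuclideanSpace ℝ (Fin (m - 1))), w ∈ p '' S i →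
      ∃ y, y ∈ S i ∧ p y = w := by
    rintro i w ⟨y, hy, rfl⟩; exact ⟨y, hy, rfl⟩
  set h : Fin N → EuclideanSpace ℝ (Fin (m - 1)) → EuclideanSpace ℝ (Fin m) := fun i w =>
    if hw : w ∈ p '' S i then (hsel i w hw).choose else c i with hhdef
  have hhmem : ∀ i w, ∀ hw : w ∈ p '' S i, h i w ∈ S i ∧ p (h i w) = w := by
    intro i w hw
    simp only [hhdef, dif_pos hw]
    exact (hsel i w hw).choose_spec
  set C₀ : ℝ≥0 := Real.toNNReal C with hC₀
  have hC₀C : (C₀ : ℝ) = C := Real.coe_toNNReal C hC0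
  have hhlip : ∀ i, LipschitzOnWith C₀ (h i) (p '' S i) := by
    intro i
    rw [lipschitzOnWith_iff_dist_le_mul]
    intro w1 hw1 w2 hw2
    obtain ⟨hm1, hp1⟩ := hhmem i w1 hw1
    obtain ⟨hm2, hp2⟩ := hhmem i w2 hw2
    rw [dist_eq_norm, dist_eq_norm, hC₀C]
    calc ‖h i w1 - h i w2‖ ≤ C * ‖p (h i w1) - p (h i w2)‖ := hSbound i _ hm1 _ hm2
      _ = C * ‖w1 - w2‖ := by rw [hp1, hp2]
  -- extend to a global Lipschitz map via coordinates
  have hext : ∀ i, ∃ g : EuclideanSpace ℝ (Fin (m - 1)) → (Fin m → ℝ),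
      LipschitzWith (1 * C₀) g ∧ EqOn (fun w => (WithLp.equiv 2 (Fin m → ℝ)) (h i w)) g (p '' S i) := by
    intro i
    exact ((PiLp.lipschitzWith_ofLp 2 (fun _ : Fin m => ℝ)).comp_lipschitzOnWith (hhlip i)).extend_pi
  choose g hglip hgeq using hext
  have hsymmlip : LipschitzWith ((Fintype.card (Fin m) : ℝ≥0) ^ ((1 / (2:ℝ≥0∞)).toReal))
      ⇑(WithLp.equiv 2 (Fin m → ℝ)).symm :=
    PiLp.lipschitzWith_toLp 2 (fun _ : Fin m => ℝ)
  set f : Fin N → EuclideanSpace ℝ (Fin (m - 1)) → EuclideanSpace ℝ (Fin m) :=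
    fun i w => (WithLp.equiv 2 (Fin m → ℝ)).symm (g i w) with hf
  have hflip : ∀ i, LipschitzWith ((Fintype.card (Fin m) : ℝ≥0) ^ ((1 / (2:ℝ≥0∞)).toReal) * (1 * C₀)) (f i) :=
    fun i => hsymmlip.comp (hglip i)
  set K : Fin N → Set (EuclideanSpace ℝ (Fin (m - 1))) := fun i => p '' S i with hK
  have hKcomp : ∀ i, IsCompact (K i) := fun i => (hScomp i).image hplip.continuous
  -- f i agrees with h i on K i
  have hfh : ∀ i, ∀ w ∈ K i, f i w = h i w := by
    intro i w hw
    have h1 : g i w = (WithLp.equiv 2 (Fin m → ℝ)) (h i w) := (hgeq i hw).symm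
    show (WithLp.equiv 2 (Fin m → ℝ)).symm (g i w) = h i w
    rw [h1, Equiv.symm_apply_apply]
  have himg : ∀ i, f i '' K i = S i := by
    intro i
    apply Subset.antisymm
    · rintro _ ⟨w, hw, rfl⟩
      rw [hfh i w hw]
      exact (hhmem i w hw).1
    · intro y hy
      have hpw : p y ∈ K i := mem_image_of_mem p hy
      refine ⟨p y, hpw, ?_⟩
      rw [hfh i (p y) hpw]
      obtain ⟨hm1, hp1⟩ := hhmem i (p y) hpw
      have hb := hSbound i (h i (p y)) hm1 y hy
      rw [hp1, sub_self, norm_zero, mul_zero] at hb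
      have : h i (p y) - y = 0 := by
        have := norm_nonneg (h i (p y) - y)
        have hz : ‖h i (p y) - y‖ = 0 := le_antisymm hb this
        exact norm_eq_zero.mp hz
      exact sub_eq_zero.mp this
  have hMun : M = ⋃ i, f i '' K i := by
    apply Subset.antisymm
    · intro x hx
      obtain ⟨j, hjmem⟩ := mem_iUnion.mp (ht hx)
      obtain ⟨hj, hxball⟩ := mem_iUnion.mp hjmem
      set i := t.equivFin ⟨j, hj⟩ with hi
      refine mem_iUnion.2 ⟨i, ?_⟩
      rw [himg i]
      refine ⟨hx, ?_⟩
      have hci : c i = (j : EuclideanSpace ℝ (Fin m)) := by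
        simp only [hc, hi, Equiv.symm_apply_apply]
      rw [hci]
      exact ball_subset_closedBall hxball
    · intro x hx
      rw [mem_iUnion] at hx
      obtain ⟨i, hxi⟩ := hx
      rw [himg i] at hxi
      exact hxi.1
  have hd0 : (0 : ℝ) ≤ (m : ℝ) - 1 := by
    have h1 : (1 : ℝ) ≤ (m : ℝ) := by exact_mod_cast hm
    linarith
  have hKfin : ∀ i, μH[(m : ℝ) - 1] (K i) < ⊤ := by
    intro i
    have hcast : (m : ℝ) - 1 =
        ((Module.finrank ℝ (EuclideanSpace ℝ (Fin (m - 1))) : ℕ) : ℝ) := by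
      rw [finrank_euclideanSpace_fin, Nat.cast_sub hm, Nat.cast_one]
    rw [hcast]
    exact (hKcomp i).measure_lt_top
  have hmain : μH[(m : ℝ) - 1] M < ⊤ := by
    rw [hMun]
    refine lt_of_le_of_lt (measure_iUnion_fintype_le _ _) ?_
    rw [ENNReal.sum_lt_top]
    intro i _
    refine lt_of_le_of_lt ((hflip i).hausdorffMeasure_image_le hd0 (K i)) ?_
    exact ENNReal.mul_lt_top (ENNReal.rpow_lt_top_of_nonneg hd0 ENNReal.coe_ne_top) (hKfin i)
  exact ⟨⟨N, f, K, fun i => ⟨_, hflip i⟩, hKcomp, hMun⟩, hmain⟩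
end

section
/- Let M ⊂ ℝ^m be a compact set and suppose that to each x ∈ M is assigned an (m−1)-dimensional linear subspace π(x) of ℝ^m with chosen unit normal e(x). If there exist δ > 0 and α > 0 (independent of x) such that for every x ∈ M one has (B_δ(x) ∩ M) ∩ (x + C_α(π(x))) = ∅, then there exist D ∈ ℕ, Lipschitz maps f_i : ℝ^{m−1} → ℝ^m for i ∈ {1,…,D}, and compact sets K_i ⊂ ℝ^{m−1} such that M = ⋃_{i=1}^D f_i(K_i); in particular H^{m−1}(M) < ∞. -/
open Metric Set MeasureTheory RealInnerProductSpace NNReal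

lemma cone_transfer {E : Type*} [NormedAddCommGroup E] [InnerProductSpace ℝ E]
    {α ε : ℝ} (hα : 0 ≤ α) (hε : 0 < ε)
    {u e' v : E} (hu : ‖u‖ = 1) (he' : ‖e'‖ = 1) (hue : ‖e' - u‖ ≤ ε)
    (hv : ⟪v, e'⟫ ≤ α * ‖v - ⟪v, e'⟫ • e'‖) :
    ⟪v, u⟫ ≤ (α + ε) * ‖v - ⟪v, u⟫ • u‖ + ε * (α + 1) * |⟪v, u⟫| := by
  set t : ℝ := ⟪v, u⟫ with ht
  set s : ℝ := ⟪v, e'⟫ with hs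
  set w : E := v - t • u with hw
  have h1 : ‖v - s • e'‖ ^ 2 = ‖v‖ ^ 2 - s ^ 2 := by
    have hn : ‖s • e'‖ = |s| := by rw [norm_smul, Real.norm_eq_abs, he', mul_one]
    rw [norm_sub_sq_real, real_inner_smul_right, hn, ← hs, sq_abs]; ring
  have h2 : ‖v - t • e'‖ ^ 2 = ‖v‖ ^ 2 - 2 * t * s + t ^ 2 := by
    have hn : ‖t • e'‖ = |t| := by rw [norm_smul, Real.norm_eq_abs, he', mul_one]
    rw [norm_sub_sq_real, real_inner_smul_right, hn, ← hs, sq_abs]; ring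
  have h3 : ‖v - s • e'‖ ≤ ‖v - t • e'‖ := by
    nlinarith [norm_nonneg (v - s • e'), norm_nonneg (v - t • e'), sq_nonneg (t - s)]
  have h4 : ‖v - t • e'‖ ≤ ‖w‖ + |t| * ε := by
    have hrw : v - t • e' = w + t • (u - e') := by
      rw [hw, smul_sub]; abel
    rw [hrw]
    calc ‖w + t • (u - e')‖ ≤ ‖w‖ + ‖t • (u - e')‖ := norm_add_le _ _
      _ = ‖w‖ + |t| * ‖u - e'‖ := by rw [norm_smul, Real.norm_eq_abs]
      _ ≤ ‖w‖ + |t| * ε := by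
          have : ‖u - e'‖ ≤ ε := by rwa [norm_sub_rev]
          gcongr
  have h5 : |s - t| ≤ ‖v‖ * ε := by
    have : s - t = ⟪v, e' - u⟫ := by rw [inner_sub_right, ← hs, ← ht]
    rw [this]
    calc |⟪v, e' - u⟫| ≤ ‖v‖ * ‖e' - u‖ := abs_real_inner_le_norm _ _
      _ ≤ ‖v‖ * ε := mul_le_mul_of_nonneg_left hue (norm_nonneg v)
  have h6 : ‖v‖ ≤ ‖w‖ + |t| := by
    have hrw : v = w + t • u := by rw [hw]; abel
    calc ‖v‖ = ‖w + t • u‖ := by rw [← hrw]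
      _ ≤ ‖w‖ + ‖t • u‖ := norm_add_le _ _
      _ = ‖w‖ + |t| := by rw [norm_smul, Real.norm_eq_abs, hu, mul_one]
  have hA : α * ‖v - s • e'‖ ≤ α * (‖w‖ + |t| * ε) :=
    mul_le_mul_of_nonneg_left (h3.trans h4) hα
  have hB : ‖v‖ * ε ≤ (‖w‖ + |t|) * ε := mul_le_mul_of_nonneg_right h6 hε.le
  have h7 : t ≤ s + ‖v‖ * ε := by
    have := (abs_le.1 h5).1
    linarith
  nlinarith [hv, hA, hB, h7]

lemma cone_twopoint {E : Type*} [NormedAddCommGroup E] [InnerProductSpace ℝ E]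
    {α ε : ℝ} (hα : 0 < α) (hε : 0 < ε) (hεα : ε * (α + 1) ≤ 1 / 2)
    {u ex ey x y : E} (hu : ‖u‖ = 1) (hex : ‖ex‖ = 1) (hey : ‖ey‖ = 1)
    (hxu : ‖ex - u‖ ≤ ε) (hyu : ‖ey - u‖ ≤ ε)
    (h1 : ⟪y - x, ex⟫ ≤ α * ‖(y - x) - ⟪y - x, ex⟫ • ex‖)
    (h2 : ⟪x - y, ey⟫ ≤ α * ‖(x - y) - ⟪x - y, ey⟫ • ey‖) :
    ‖y - x‖ ≤ (2 * α + 3) * ‖(y - x) - ⟪y - x, u⟫ • u‖ := by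
  set v : E := y - x with hv
  set t : ℝ := ⟪v, u⟫ with htdef
  set w : E := v - t • u with hwdef
  have A1 : t ≤ (α + ε) * ‖w‖ + ε * (α + 1) * |t| :=
    cone_transfer hα.le hε hu hex hxu h1
  have hneg : x - y = -v := by rw [hv]; abel
  have A2 : -t ≤ (α + ε) * ‖w‖ + ε * (α + 1) * |t| := by
    have h2' : ⟪-v, ey⟫ ≤ α * ‖(-v) - ⟪-v, ey⟫ • ey‖ := by rwa [hneg] at h2
    have := cone_transfer hα.le hε hu hey hyu h2'
    have e1 : ⟪-v, u⟫ = -t := by rw [inner_neg_left, htdef]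
    have e2 : (-v) - ⟪-v, u⟫ • u = -w := by rw [e1, hwdef]; module
    rw [e2, norm_neg, e1, abs_neg] at this
    exact this
  have habs : |t| ≤ (α + ε) * ‖w‖ + ε * (α + 1) * |t| := abs_le.2 ⟨by linarith, A1⟩
  have hε1 : ε ≤ 1 := by nlinarith
  have ht2 : |t| ≤ 2 * (α + 1) * ‖w‖ := by
    have hh : ε * (α + 1) * |t| ≤ (1 / 2) * |t| :=
      mul_le_mul_of_nonneg_right hεα (abs_nonneg t)
    have : (α + ε) * ‖w‖ ≤ (α + 1) * ‖w‖ := by nlinarith [norm_nonneg w]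
    linarith
  have h6 : ‖v‖ ≤ ‖w‖ + |t| := by
    have hrw : v = w + t • u := by rw [hwdef]; abel
    calc ‖v‖ = ‖w + t • u‖ := by rw [← hrw]
      _ ≤ ‖w‖ + ‖t • u‖ := norm_add_le _ _
      _ = ‖w‖ + |t| := by rw [norm_smul, Real.norm_eq_abs, hu, mul_one]
  calc ‖v‖ ≤ ‖w‖ + |t| := h6
    _ ≤ ‖w‖ + 2 * (α + 1) * ‖w‖ := by linarith
    _ = (2 * α + 3) * ‖w‖ := by ring


lemma hausdorff_lt_top_of_bounded (n : ℕ) {A : Set (EuclideanSpace ℝ (Fin n))}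
    (hA : Bornology.IsBounded A) : μH[(n : ℝ)] A < ⊤ := by
  set ψ : (Fin n → ℝ) ≃L[ℝ] EuclideanSpace ℝ (Fin n) := (EuclideanSpace.equiv (Fin n) ℝ).symm
  obtain ⟨Cψ, hCψ⟩ : ∃ C : ℝ≥0, LipschitzWith C ψ :=
    ⟨_, (ψ : (Fin n → ℝ) →L[ℝ] EuclideanSpace ℝ (Fin n)).lipschitz⟩
  obtain ⟨Cφ, hCφ⟩ : ∃ C : ℝ≥0, LipschitzWith C ψ.symm :=
    ⟨_, (ψ.symm : EuclideanSpace ℝ (Fin n) →L[ℝ] (Fin n → ℝ)).lipschitz⟩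
  have hB : Bornology.IsBounded (⇑ψ.symm '' A) := hCφ.isBounded_image hA
  obtain ⟨R, hR⟩ := hB.subset_closedBall 0
  have hsub : A ⊆ ⇑ψ '' (closedBall 0 R) := by
    intro x hx
    refine ⟨ψ.symm x, hR ⟨x, hx, rfl⟩, by simp⟩
  have hd : (0 : ℝ) ≤ (n : ℝ) := by positivity
  refine lt_of_le_of_lt (le_trans (measure_mono hsub)
    (hCψ.hausdorffMeasure_image_le hd _)) ?_
  have hpi : (μH[(n : ℝ)] : Measure (Fin n → ℝ)) = volume := by
      have := MeasureTheory.hausdorffMeasure_pi_real (ι := Fin n)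
      simpa using this
  rw [hpi]
  exact ENNReal.mul_lt_top (ENNReal.rpow_lt_top_of_nonneg hd ENNReal.coe_ne_top)
    (isCompact_closedBall 0 R).measure_lt_top


set_option maxHeartbeats 1000000

/-- If a compact set `M ⊂ ℝ^m` avoids, near each of its points `x`, an open
cone `C_α(π(x))` of fixed aperture `α` and fixed size `δ` (where `π(x) = e(x)^⊥` for a unit
vector `e(x)` depending on `x`), then `M` is a finite union of Lipschitz images of compact
subsets of `ℝ^{m-1}`; in particular `H^{m-1}(M) < ∞`. -/
theorem cone_avoidance_rectifiable_variable_plane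
    (m : ℕ) (M : Set (EuclideanSpace ℝ (Fin m))) (hM : IsCompact M)
    (e : EuclideanSpace ℝ (Fin m) → EuclideanSpace ℝ (Fin m))
    (he : ∀ x ∈ M, ‖e x‖ = 1)
    (δ α : ℝ) (hδ : 0 < δ) (hα : 0 < α)
    (hcone : ∀ x ∈ M,
      (Metric.ball x δ ∩ M) ∩
        {y | α * ‖(y - x) - ⟪y - x, e x⟫ • e x‖ < ⟪y - x, e x⟫} = ∅) :
    (∃ (D : ℕ) (f : Fin D → (EuclideanSpace ℝ (Fin (m - 1)) → EuclideanSpace ℝ (Fin m)))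
        (K : Fin D → Set (EuclideanSpace ℝ (Fin (m - 1)))),
        (∀ i, ∃ L : ℝ≥0, LipschitzWith L (f i)) ∧ (∀ i, IsCompact (K i)) ∧
        M = ⋃ i, f i '' K i) ∧
      μH[(m : ℝ) - 1] M < ⊤ := by
  rcases eq_or_ne m 0 with rfl | hm
  · have hM0 : M = ∅ := eq_empty_iff_forall_notMem.2 fun x hx => by
      have h1 := he x hx
      rw [Subsingleton.elim (e x) 0, norm_zero] at h1
      norm_num at h1
    refine ⟨⟨0, Fin.elim0, Fin.elim0, fun i => i.elim0, fun i => i.elim0, ?_⟩, ?_⟩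
    · rw [hM0]; exact (iUnion_of_empty _).symm
    · rw [hM0, measure_empty]; simp
  obtain ⟨n, rfl⟩ : ∃ n, m = n + 1 :=
    ⟨m - 1, (Nat.succ_pred_eq_of_pos (Nat.pos_of_ne_zero hm)).symm⟩
  set ε : ℝ := 1 / (2 * (α + 1)) with hεdef
  have hε : 0 < ε := by positivity
  have hεα : ε * (α + 1) ≤ 1 / 2 := by
    have h : ε * (α + 1) = 1 / 2 := by rw [hεdef]; field_simp
    exact le_of_eq h
  -- cone inequality
  have hineq : ∀ x ∈ M, ∀ y ∈ M, dist y x < δ →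
      ⟪y - x, e x⟫ ≤ α * ‖(y - x) - ⟪y - x, e x⟫ • e x‖ := by
    intro x hx y hy hdist
    by_contra hlt
    push_neg at hlt
    have hmem : y ∈ (Metric.ball x δ ∩ M) ∩
        {y | α * ‖(y - x) - ⟪y - x, e x⟫ • e x‖ < ⟪y - x, e x⟫} :=
      ⟨⟨mem_ball.2 hdist, hy⟩, hlt⟩
    rw [hcone x hx] at hmem
    exact hmem
  -- finite covers
  obtain ⟨t, ht⟩ := hM.elim_finite_subcover (fun c : EuclideanSpace ℝ (Fin (n + 1)) => Metric.ball c (δ / 2))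
    (fun _ => isOpen_ball)
    (fun x hx => mem_iUnion.2 ⟨x, mem_ball_self (by linarith)⟩)
  obtain ⟨s, hs⟩ := (isCompact_sphere (0 : EuclideanSpace ℝ (Fin (n + 1))) 1).elim_finite_subcover
    (fun c : (sphere (0 : EuclideanSpace ℝ (Fin (n + 1))) 1) => Metric.ball (c : EuclideanSpace ℝ (Fin (n + 1))) ε) (fun _ => isOpen_ball)
    (fun u hu => mem_iUnion.2 ⟨⟨u, hu⟩, mem_ball_self hε⟩)
  -- the pieces
  set SS : ↥t × ↥s → Set (EuclideanSpace ℝ (Fin (n + 1))) := fun p =>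
    {x | x ∈ M ∧ x ∈ Metric.ball ((p.1 : EuclideanSpace ℝ (Fin (n + 1)))) (δ / 2) ∧
      e x ∈ Metric.ball (((p.2 : sphere (0 : EuclideanSpace ℝ (Fin (n + 1))) 1)) : EuclideanSpace ℝ (Fin (n + 1))) ε} with hSS
  have main : ∀ p : ↥t × ↥s, ∃ (f : EuclideanSpace ℝ (Fin n) → EuclideanSpace ℝ (Fin (n + 1))) (K : Set (EuclideanSpace ℝ (Fin n))),
      (∃ L : ℝ≥0, LipschitzWith L f) ∧ IsCompact K ∧ SS p ⊆ f '' K ∧ f '' K ⊆ M := by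
    intro p
    set u : EuclideanSpace ℝ (Fin (n + 1)) := ((p.2 : sphere (0 : EuclideanSpace ℝ (Fin (n + 1))) 1) : EuclideanSpace ℝ (Fin (n + 1))) with hudef
    have hu : ‖u‖ = 1 := mem_sphere_zero_iff_norm.1 (p.2 : sphere (0 : EuclideanSpace ℝ (Fin (n + 1))) 1).2
    -- key two-point estimate
    have key : ∀ x ∈ SS p, ∀ y ∈ SS p,
        ‖y - x‖ ≤ (2 * α + 3) * ‖(y - x) - ⟪y - x, u⟫ • u‖ := by
      intro x hx y hy
      obtain ⟨hxM, hxb, hxe⟩ := hx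
      obtain ⟨hyM, hyb, hye⟩ := hy
      have hdist : dist y x < δ := by
        have h1 := mem_ball.1 hxb
        have h2 := mem_ball.1 hyb
        calc dist y x ≤ dist y (p.1 : EuclideanSpace ℝ (Fin (n + 1))) + dist x (p.1 : EuclideanSpace ℝ (Fin (n + 1))) := dist_triangle_right _ _ _
          _ < δ / 2 + δ / 2 := by exact add_lt_add h2 h1
          _ = δ := by ring
      have hdist' : dist x y < δ := by rwa [dist_comm]
      exact cone_twopoint hα hε hεα hu (he x hxM) (he y hyM)
        (le_of_lt (by rw [← dist_eq_norm]; exact mem_ball.1 hxe))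
        (le_of_lt (by rw [← dist_eq_norm]; exact mem_ball.1 hye))
        (hineq x hxM y hyM hdist) (hineq y hyM x hxM hdist')
    -- the projection map Q
    have hune : u ≠ 0 := fun h => by rw [h, norm_zero] at hu; norm_num at hu
    set W : Submodule ℝ (EuclideanSpace ℝ (Fin (n + 1))) := (ℝ ∙ u)ᗮ with hWdef
    have hWrank : Module.finrank ℝ W = n := by
      have h2 := Submodule.finrank_add_finrank_orthogonal
        (K := ((ℝ ∙ u) : Submodule ℝ (EuclideanSpace ℝ (Fin (n + 1)))))
      rw [finrank_span_singleton hune, finrank_euclideanSpace_fin] at h2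
      rw [hWdef]
      omega
    have hmem : ∀ v : EuclideanSpace ℝ (Fin (n + 1)), v - ⟪v, u⟫ • u ∈ W := by
      intro v
      rw [hWdef, Submodule.mem_orthogonal_singleton_iff_inner_right]
      rw [inner_sub_right, real_inner_smul_right, real_inner_self_eq_norm_sq, hu]
      rw [real_inner_comm u v]
      ring
    set ρ : W ≃ₗᵢ[ℝ] EuclideanSpace ℝ (Fin (Module.finrank ℝ W)) :=
      (stdOrthonormalBasis ℝ W).repr with hρ
    set κ : EuclideanSpace ℝ (Fin (Module.finrank ℝ W)) ≃ₗᵢ[ℝ] EuclideanSpace ℝ (Fin n) :=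
      LinearIsometryEquiv.piLpCongrLeft 2 ℝ ℝ (finCongr hWrank) with hκ
    set Q : EuclideanSpace ℝ (Fin (n + 1)) → EuclideanSpace ℝ (Fin n) := fun v => κ (ρ ⟨v - ⟪v, u⟫ • u, hmem v⟩) with hQdef
    have hQdist : ∀ a b : EuclideanSpace ℝ (Fin (n + 1)), ‖Q a - Q b‖ = ‖(a - b) - ⟪a - b, u⟫ • u‖ := by
      intro a b
      have h1 : Q a - Q b =
          κ (ρ (⟨a - ⟪a, u⟫ • u, hmem a⟩ - ⟨b - ⟪b, u⟫ • u, hmem b⟩)) := by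
        rw [map_sub, map_sub]
      rw [h1, κ.norm_map, ρ.norm_map]
      have h2 : ((⟨a - ⟪a, u⟫ • u, hmem a⟩ - ⟨b - ⟪b, u⟫ • u, hmem b⟩ : W) : EuclideanSpace ℝ (Fin (n + 1)))
          = (a - b) - ⟪a - b, u⟫ • u := by
        push_cast
        rw [inner_sub_left, sub_smul]
        abel
      rw [← h2]
      rfl
    have lipQ : LipschitzWith 2 Q := by
      apply LipschitzWith.of_dist_le_mul
      intro a b
      rw [dist_eq_norm, dist_eq_norm, hQdist]
      calc ‖(a - b) - ⟪a - b, u⟫ • u‖ ≤ ‖a - b‖ + ‖⟪a - b, u⟫ • u‖ := norm_sub_le _ _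
        _ ≤ ‖a - b‖ + ‖a - b‖ := by
            have h5 : ‖⟪a - b, u⟫ • u‖ = |⟪a - b, u⟫| := by
              rw [norm_smul, Real.norm_eq_abs, hu, mul_one]
            have h6 := abs_real_inner_le_norm (a - b) u
            rw [hu, mul_one] at h6
            rw [h5]
            linarith
        _ = (2 : ℝ≥0) * ‖a - b‖ := by push_cast; ring
    -- the inverse map g
    set g : EuclideanSpace ℝ (Fin n) → EuclideanSpace ℝ (Fin (n + 1)) := Function.invFunOn Q (SS p) with hgdef
    have hgS : ∀ z ∈ Q '' SS p, g z ∈ SS p := by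
      rintro z ⟨x, hx, rfl⟩
      exact Function.invFunOn_mem ⟨x, hx, rfl⟩
    have hgQ : ∀ z ∈ Q '' SS p, Q (g z) = z := by
      rintro z ⟨x, hx, rfl⟩
      exact Function.invFunOn_eq ⟨x, hx, rfl⟩
    set L' : ℝ≥0 := ⟨2 * α + 3, by positivity⟩ with hL'
    have hglip : LipschitzOnWith L' g (Q '' SS p) := by
      apply LipschitzOnWith.of_dist_le_mul
      intro z hz z' hz'
      rw [dist_eq_norm, dist_eq_norm]
      calc ‖g z - g z'‖
          ≤ (2 * α + 3) * ‖(g z - g z') - ⟪g z - g z', u⟫ • u‖ :=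
            key (g z') (hgS z' hz') (g z) (hgS z hz)
        _ = (2 * α + 3) * ‖Q (g z) - Q (g z')‖ := by rw [hQdist]
        _ = (L' : ℝ) * ‖z - z'‖ := by rw [hgQ z hz, hgQ z' hz']; rfl
    -- extension
    set eqv : EuclideanSpace ℝ (Fin (n + 1)) ≃L[ℝ] (Fin (n + 1) → ℝ) := EuclideanSpace.equiv (Fin (n + 1)) ℝ with heqv
    obtain ⟨C1, hC1⟩ : ∃ C : ℝ≥0, LipschitzWith C ⇑eqv :=
      ⟨_, (eqv : EuclideanSpace ℝ (Fin (n + 1)) →L[ℝ] (Fin (n + 1) → ℝ)).lipschitz⟩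
    obtain ⟨C2, hC2⟩ : ∃ C : ℝ≥0, LipschitzWith C ⇑eqv.symm :=
      ⟨_, (eqv.symm : (Fin (n + 1) → ℝ) →L[ℝ] EuclideanSpace ℝ (Fin (n + 1))).lipschitz⟩
    have hcomp : LipschitzOnWith (C1 * L') (⇑eqv ∘ g) (Q '' SS p) :=
      hC1.comp_lipschitzOnWith hglip
    obtain ⟨G0, hG0, hG0eq⟩ := hcomp.extend_pi
    set G : EuclideanSpace ℝ (Fin n) → EuclideanSpace ℝ (Fin (n + 1)) := fun z => eqv.symm (G0 z) with hGdef
    have hGlip : LipschitzWith (C2 * (C1 * L')) G := hC2.comp hG0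
    have hGx : ∀ x ∈ SS p, G (Q x) = x := by
      intro x hx
      have h1 : Q x ∈ Q '' SS p := mem_image_of_mem _ hx
      have h2 : G0 (Q x) = eqv (g (Q x)) := (hG0eq h1).symm
      have h3 : g (Q x) = x := by
        have hg1 : g (Q x) ∈ SS p := hgS _ h1
        have hg2 : Q (g (Q x)) = Q x := hgQ _ h1
        have h4 := key x hx (g (Q x)) hg1
        rw [← hQdist, hg2, sub_self, norm_zero, mul_zero] at h4
        have h5 : g (Q x) - x = 0 := norm_le_zero_iff.1 h4
        have := sub_eq_zero.1 h5
        exact this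
      rw [hGdef]
      simp only [h2, ContinuousLinearEquiv.symm_apply_apply, h3]
    have hSb : Bornology.IsBounded (SS p) :=
      (hM.isBounded).subset (fun x hx => hx.1)
    set K : Set (EuclideanSpace ℝ (Fin n)) := closure (Q '' SS p) with hK
    have hKc : IsCompact K :=
      isCompact_of_isClosed_isBounded isClosed_closure (lipQ.isBounded_image hSb).closure
    refine ⟨G, K, ⟨_, hGlip⟩, hKc, ?_, ?_⟩
    · intro x hx
      exact ⟨Q x, subset_closure (mem_image_of_mem _ hx), hGx x hx⟩
    · have h1 : G '' (Q '' SS p) ⊆ SS p := by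
        rintro _ ⟨_, ⟨x, hx, rfl⟩, rfl⟩
        rw [hGx x hx]
        exact hx
      calc G '' K ⊆ closure (G '' (Q '' SS p)) :=
            image_closure_subset_closure_image hGlip.continuous
        _ ⊆ closure (SS p) := closure_mono h1
        _ ⊆ M := (hM.isClosed.closure_subset_iff).2 (fun x hx => hx.1)
  choose fP KP hlipP hcompP hsub1P hsub2P using main
  set D := Fintype.card (↥t × ↥s) with hD
  set Eqv : Fin D ≃ ↥t × ↥s := (Fintype.equivFin _).symm with hEqv
  set fI : Fin D → EuclideanSpace ℝ (Fin n) → EuclideanSpace ℝ (Fin (n + 1)) := fun i => fP (Eqv i) with hfI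
  set KI : Fin D → Set (EuclideanSpace ℝ (Fin n)) := fun i => KP (Eqv i) with hKI
  have hMeq : M = ⋃ i, fI i '' KI i := by
    apply Subset.antisymm
    · intro x hx
      have h1 := ht hx
      rw [mem_iUnion₂] at h1
      obtain ⟨c, hcT, hcb⟩ := h1
      have h2 := hs (show e x ∈ sphere (0 : EuclideanSpace ℝ (Fin (n + 1))) 1 from mem_sphere_zero_iff_norm.2 (he x hx))
      rw [mem_iUnion₂] at h2
      obtain ⟨us, husS, hub⟩ := h2
      set p : ↥t × ↥s := (⟨c, hcT⟩, ⟨us, husS⟩) with hp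
      have hxS : x ∈ SS p := ⟨hx, hcb, hub⟩
      have h3 : x ∈ fP p '' KP p := hsub1P p hxS
      refine mem_iUnion.2 ⟨Eqv.symm p, ?_⟩
      simp only [hfI, hKI, Equiv.apply_symm_apply]
      exact h3
    · exact iUnion_subset fun i => hsub2P (Eqv i)
  have hcast : ((n + 1 : ℕ) : ℝ) - 1 = (n : ℝ) := by push_cast; ring
  constructor
  · exact ⟨D, fI, KI, fun i => hlipP (Eqv i), fun i => hcompP (Eqv i), hMeq⟩
  · rw [hcast, hMeq]
    refine lt_of_le_of_lt (measure_iUnion_le _) ?_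
    rw [tsum_fintype]
    refine ENNReal.sum_lt_top.2 fun i _ => ?_
    obtain ⟨L, hL⟩ := hlipP (Eqv i)
    refine lt_of_le_of_lt (hL.hausdorffMeasure_image_le (by positivity) _) ?_
    exact ENNReal.mul_lt_top
      (ENNReal.rpow_lt_top_of_nonneg (by positivity) ENNReal.coe_ne_top)
      (hausdorff_lt_top_of_bounded n (hcompP (Eqv i)).isBounded)
end

section
/- Let n ≥ 2, let B ⊂ ℝ^{n−1} be an open ball centered at a point w̃, and let φ : B → ℝ be differentiable with ∇φ(w̃) = 0. Assume that ∇φ is Lipschitz on B with constant C₂ > 0 and that φ is uniformly concave with constant C₁ > 0, i.e. ⟨∇φ(ỹ) − ∇φ(x̃), x̃ − ỹ⟩ ≥ C₁|x̃ − ỹ|² for all x̃, ỹ ∈ B. Let e ∈ ℝ^{n−1} be a unit vector and set α := C₂/C₁. Then for every point z̃ = w̃ + b ∈ B whose displacement b satisfies the cone condition α·|b − ⟨b,e⟩e| < ⟨b,e⟩, one has ⟨∇φ(z̃), e⟩ ≤ 0. -/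
open Metric Set RealInnerProductSpace

/-- Let `φ` be differentiable on a ball `B ⊂ ℝ^{n-1}` centered at `wt`, with
gradient `G`, `G wt = 0`, `G` Lipschitz on `B` with constant `C₂`, and `φ` uniformly concave on
`B` with constant `C₁`. Then for any unit vector `e` and any displacement `b` lying in the open
cone of aperture `α = C₂/C₁` around `e` with `wt + b ∈ B`, one has `⟪∇φ(wt + b), e⟫ ≤ 0`. -/
theorem gradient_nonpos_in_cone
    (n : ℕ) (hn : 2 ≤ n)
    (wt : EuclideanSpace ℝ (Fin (n - 1))) (ρ : ℝ) (hρ : 0 < ρ)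
    (φ : EuclideanSpace ℝ (Fin (n - 1)) → ℝ)
    (G : EuclideanSpace ℝ (Fin (n - 1)) → EuclideanSpace ℝ (Fin (n - 1)))
    (hdiff : ∀ x ∈ Metric.ball wt ρ, HasGradientAt φ (G x) x)
    (hG0 : G wt = 0)
    (C₁ C₂ : ℝ) (hC₁ : 0 < C₁) (hC₂ : 0 < C₂)
    (hLip : ∀ x ∈ Metric.ball wt ρ, ∀ y ∈ Metric.ball wt ρ, ‖G x - G y‖ ≤ C₂ * ‖x - y‖)
    (hconc : ∀ x ∈ Metric.ball wt ρ, ∀ y ∈ Metric.ball wt ρ,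
      ⟪G y - G x, x - y⟫ ≥ C₁ * ‖x - y‖ ^ 2)
    (e : EuclideanSpace ℝ (Fin (n - 1))) (he : ‖e‖ = 1) :
    ∀ b : EuclideanSpace ℝ (Fin (n - 1)), wt + b ∈ Metric.ball wt ρ →
      (C₂ / C₁) * ‖b - ⟪b, e⟫ • e‖ < ⟪b, e⟫ →
      ⟪G (wt + b), e⟫ ≤ 0 := by
  intro b hb hcone
  set z := wt + b with hz
  have hwt : wt ∈ Metric.ball wt ρ := Metric.mem_ball_self hρ
  set t : ℝ := ⟪b, e⟫ with ht
  set p := b - t • e with hp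
  have hpnn : (0:ℝ) ≤ (C₂ / C₁) * ‖p‖ :=
    mul_nonneg (le_of_lt (div_pos hC₂ hC₁)) (norm_nonneg _)
  have htpos : 0 < t := lt_of_le_of_lt hpnn hcone
  -- concavity
  have hc := hconc wt hwt z hb
  have hwz : wt - z = -b := by simp [hz]
  have hGz : G z - G wt = G z := by simp [hG0]
  rw [hwz, hGz] at hc
  have hcb : ⟪G z, b⟫ ≤ -(C₁ * ‖b‖ ^ 2) := by
    rw [inner_neg_right] at hc
    simp only [norm_neg] at hc
    linarith
  -- Lipschitz
  have hL : ‖G z‖ ≤ C₂ * ‖b‖ := by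
    have := hLip z hb wt hwt
    simpa [hG0, hz] using this
  -- decomposition
  have hdec : ⟪G z, b⟫ = t * ⟪G z, e⟫ + ⟪G z, p⟫ := by
    have hb' : b = t • e + p := by simp [hp]
    rw [hb', inner_add_right, real_inner_smul_right]
  have habs : ⟪G z, p⟫ ≥ -(C₂ * ‖b‖ * ‖p‖) := by
    have h1 : |⟪G z, p⟫| ≤ ‖G z‖ * ‖p‖ := abs_real_inner_le_norm _ _
    have h2 : ‖G z‖ * ‖p‖ ≤ C₂ * ‖b‖ * ‖p‖ :=
      mul_le_mul_of_nonneg_right hL (norm_nonneg _)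
    have := abs_le.mp h1
    linarith
  have hcone' : C₂ * ‖p‖ < C₁ * t := by
    rw [div_mul_eq_mul_div, div_lt_iff₀ hC₁] at hcone
    linarith
  have htle : t ≤ ‖b‖ := by
    have := real_inner_le_norm b e
    simpa [he] using this
  have key : t * ⟪G z, e⟫ ≤ 0 := by
    have h1 : ‖b‖ * (C₂ * ‖p‖) ≤ ‖b‖ * (C₁ * t) :=
      mul_le_mul_of_nonneg_left hcone'.le (norm_nonneg b)
    have h2 : C₁ * ‖b‖ * t ≤ C₁ * ‖b‖ * ‖b‖ :=
      mul_le_mul_of_nonneg_left htle (mul_nonneg hC₁.le (norm_nonneg b))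
    nlinarith
  by_contra h
  push_neg at h
  nlinarith
end

section
/- Let Ψ : ℝ^n → ℝ be a convex function, let ν ∈ ℝ^n and a ∈ ℝ, and suppose the tilted sublevel set S := {x ∈ ℝ^n : Ψ(x) < ⟨ν, x⟩ + a} is nonempty and bounded. Then ν is attained as a subgradient of Ψ: there exists x₀ ∈ ℝ^n such that Ψ(z) ≥ Ψ(x₀) + ⟨ν, z − x₀⟩ for all z ∈ ℝ^n. In particular, if Ψ is differentiable, then ν lies in the image ∇Ψ(ℝ^n) of the gradient map. -/
open Set RealInnerProductSpace

/-- Let `Ψ : ℝ^n → ℝ` be convex and suppose the tilted sublevel set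
`S = {x : Ψ x < ⟪ν, x⟫ + a}` is nonempty and bounded.  Then `ν` is attained as a subgradient
of `Ψ` at some point `x₀`; in particular, if `Ψ` is differentiable with gradient `G`, then
`ν ∈ range G`. -/
theorem subgradient_attained_of_bounded_sublevel
    (n : ℕ)
    (Ψ : EuclideanSpace ℝ (Fin n) → ℝ)
    (hconv : ConvexOn ℝ Set.univ Ψ)
    (ν : EuclideanSpace ℝ (Fin n)) (a : ℝ)
    (hne : {x | Ψ x < ⟪ν, x⟫ + a}.Nonempty)
    (hbd : Bornology.IsBounded {x | Ψ x < ⟪ν, x⟫ + a}) :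
    (∃ x₀, ∀ z, Ψ z ≥ Ψ x₀ + ⟪ν, z - x₀⟫) ∧
      ∀ G : EuclideanSpace ℝ (Fin n) → EuclideanSpace ℝ (Fin n),
        (∀ x, HasGradientAt Ψ (G x) x) → ν ∈ Set.range G := by
  set Φ : EuclideanSpace ℝ (Fin n) → ℝ := fun x => Ψ x - ⟪ν, x⟫ with hΦ
  have hΨcont : Continuous Ψ := by
    have := hconv.continuousOn isOpen_univ
    rw [← continuousOn_univ]; exact this
  have hΦcont : Continuous Φ := by
    exact hΨcont.sub ((innerSL ℝ ν).continuous)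
  set S := {x | Ψ x < ⟪ν, x⟫ + a} with hS
  have hScomp : IsCompact (closure S) := hbd.isCompact_closure
  obtain ⟨x₀, hx₀mem, hx₀min⟩ :=
    hScomp.exists_isMinOn (hne.closure) hΦcont.continuousOn
  have hΦa : ∀ x ∈ closure S, Φ x ≤ a := by
    intro x hx
    have : closure S ⊆ {x | Φ x ≤ a} := by
      apply closure_minimal _ (isClosed_le hΦcont continuous_const)
      intro y hy
      simp only [hS, mem_setOf_eq] at hy
      show Ψ y - ⟪ν, y⟫ ≤ a
      linarith
    exact this hx
  have hglob : ∀ z, Φ x₀ ≤ Φ z := by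
    intro z
    by_contra h
    push_neg at h
    have hz : z ∈ S := by
      simp only [hS, mem_setOf_eq]
      have := hΦa x₀ hx₀mem
      simp only [hΦ] at h this ⊢
      linarith
    exact absurd (hx₀min (subset_closure hz)) (not_le.mpr h)
  have hsub : ∀ z, Ψ z ≥ Ψ x₀ + ⟪ν, z - x₀⟫ := by
    intro z
    have := hglob z
    simp only [hΦ] at this
    rw [inner_sub_right]
    linarith
  refine ⟨⟨x₀, hsub⟩, ?_⟩
  intro G hG
  refine ⟨x₀, ?_⟩
  have hloc : IsLocalMin Φ x₀ := Filter.Eventually.of_forall hglob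
  have hF : HasFDerivAt Φ ((InnerProductSpace.toDual ℝ _ (G x₀)) - (innerSL ℝ ν)) x₀ := by
    have h1 : HasFDerivAt Ψ (InnerProductSpace.toDual ℝ _ (G x₀)) x₀ :=
      (hasGradientAt_iff_hasFDerivAt.mp (hG x₀))
    exact h1.sub ((innerSL ℝ ν).hasFDerivAt)
  have := hloc.hasFDerivAt_eq_zero hF
  have hd : (InnerProductSpace.toDual ℝ _ (G x₀)) = innerSL ℝ ν := by
    rwa [sub_eq_zero] at this
  have : G x₀ = ν := by
    apply (InnerProductSpace.toDual ℝ _).injective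
    rw [hd]; rfl
  exact this
end

section
/- Let Ω ⊂ ℝ^n be a bounded convex open set and let Λ ⊂ ℝ^n be a bounded open uniformly convex set with C^{1,1} boundary; let P_Λ denote the metric projection onto cl Λ. Let x ∈ ∂Ω and y ∈ ∂Λ with x ≠ y, suppose ⟨x − y, z − y⟩ ≤ 0 for all z ∈ Λ (so that y = P_Λ(x) and x ∉ cl Λ), and suppose the half-line {y + t·(x − y)/|x − y| : t ≥ 0} is disjoint from Ω. Then y belongs to ∂(P_Λ(Ω) ∩ ∂Λ), the boundary of the projection set P_Λ(Ω) ∩ ∂Λ taken relative to the topological space ∂Λ. -/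
open Metric Set RealInnerProductSpace

/-- The point of `ℝ^{m+1}` with first `m` coordinates `x` and last coordinate `t`. -/
noncomputable def mkPt {m : ℕ} (x : EuclideanSpace ℝ (Fin m)) (t : ℝ) :
    EuclideanSpace ℝ (Fin (m + 1)) :=
  (EuclideanSpace.equiv (Fin (m + 1)) ℝ).symm (Fin.snoc (EuclideanSpace.equiv (Fin m) ℝ x) t)

/-- The first `m` coordinates of a point of `ℝ^{m+1}`. -/
noncomputable def initPt {m : ℕ} (p : EuclideanSpace ℝ (Fin (m + 1))) :
    EuclideanSpace ℝ (Fin m) :=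
  (EuclideanSpace.equiv (Fin m) ℝ).symm (Fin.init (EuclideanSpace.equiv (Fin (m + 1)) ℝ p))

/-- The last coordinate of a point of `ℝ^{m+1}`. -/
def lastCoord {m : ℕ} (p : EuclideanSpace ℝ (Fin (m + 1))) : ℝ := p (Fin.last m)

/-- A bounded open convex set `Λ ⊂ ℝ^{m+1}` is *uniformly convex with `C^{1,1}` boundary* if
there are uniform constants `C₁, C₂ > 0` such that near each boundary point, after a rotation,
`∂Λ` is the graph of a concave function `φ` defined on an `m`-dimensional ball, with `Λ` lying
below the graph, where the gradient `G` of `φ` is Lipschitz with constant `C₂` and satisfies the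
uniform concavity inequality `⟪G ỹ - G x̃, x̃ - ỹ⟫ ≥ C₁ ‖x̃ - ỹ‖²`. -/
def UniformlyConvexC11 {m : ℕ} (Λ : Set (EuclideanSpace ℝ (Fin (m + 1)))) : Prop :=
  ∃ C₁ C₂ : ℝ, 0 < C₁ ∧ 0 < C₂ ∧
    ∀ w ∈ frontier Λ,
      ∃ (R : EuclideanSpace ℝ (Fin (m + 1)) ≃ₗᵢ[ℝ] EuclideanSpace ℝ (Fin (m + 1)))
        (r ρ : ℝ) (wt : EuclideanSpace ℝ (Fin m))
        (φ : EuclideanSpace ℝ (Fin m) → ℝ)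
        (G : EuclideanSpace ℝ (Fin m) → EuclideanSpace ℝ (Fin m)),
        0 < r ∧ 0 < ρ ∧ R w = mkPt wt (φ wt) ∧
        (∀ z ∈ Metric.ball (R w) r, initPt z ∈ Metric.ball wt ρ) ∧
        (R '' Λ) ∩ Metric.ball (R w) r =
          {z ∈ Metric.ball (R w) r | lastCoord z < φ (initPt z)} ∧
        (∀ x ∈ Metric.ball wt ρ, HasGradientAt φ (G x) x) ∧
        (∀ x ∈ Metric.ball wt ρ, ∀ y ∈ Metric.ball wt ρ, ‖G x - G y‖ ≤ C₂ * ‖x - y‖) ∧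
        (∀ x ∈ Metric.ball wt ρ, ∀ y ∈ Metric.ball wt ρ,
          ⟪G y - G x, x - y⟫ ≥ C₁ * ‖x - y‖ ^ 2)

/-- The boundary of `S` relative to the topological space `∂Λ`, viewed as a subset of the
ambient space. -/
def relBd {F : Type*} [TopologicalSpace F] (Λ S : Set F) : Set F :=
  (fun y : frontier Λ => (y : F)) '' frontier ((fun y : frontier Λ => (y : F)) ⁻¹' S)

set_option maxHeartbeats 1000000

section helpers
variable {m : ℕ}

lemma mkPt_apply (a : EuclideanSpace ℝ (Fin m)) (t : ℝ) (i : Fin (m+1)) :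
    mkPt a t i = Fin.snoc (α := fun _ => ℝ) (fun j => a j) t i := rfl

lemma mkPt_castSucc (a : EuclideanSpace ℝ (Fin m)) (t : ℝ) (j : Fin m) :
    mkPt a t j.castSucc = a j := by rw [mkPt_apply, Fin.snoc_castSucc]

lemma mkPt_last (a : EuclideanSpace ℝ (Fin m)) (t : ℝ) :
    mkPt a t (Fin.last m) = t := by rw [mkPt_apply, Fin.snoc_last]

lemma initPt_apply (p : EuclideanSpace ℝ (Fin (m+1))) (i : Fin m) :
    initPt p i = p i.castSucc := rfl

lemma initPt_mkPt (a : EuclideanSpace ℝ (Fin m)) (t : ℝ) : initPt (mkPt a t) = a := by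
  ext i; rw [initPt_apply, mkPt_castSucc]

lemma lastCoord_mkPt (a : EuclideanSpace ℝ (Fin m)) (t : ℝ) : lastCoord (mkPt a t) = t := by
  rw [lastCoord, mkPt_last]

lemma mkPt_init_last (p : EuclideanSpace ℝ (Fin (m+1))) :
    mkPt (initPt p) (lastCoord p) = p := by
  ext i
  refine Fin.lastCases ?_ (fun j => ?_) i
  · rw [mkPt_last]; rfl
  · rw [mkPt_castSucc, initPt_apply]

lemma mkPt_sub (a b : EuclideanSpace ℝ (Fin m)) (s t : ℝ) :
    mkPt a s - mkPt b t = mkPt (a - b) (s - t) := by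
  ext i
  have h : (mkPt a s - mkPt b t) i = mkPt a s i - mkPt b t i := rfl
  rw [h]
  refine Fin.lastCases ?_ (fun j => ?_) i
  · rw [mkPt_last, mkPt_last, mkPt_last]
  · rw [mkPt_castSucc, mkPt_castSucc, mkPt_castSucc]; rfl

lemma mkPt_smul (c : ℝ) (a : EuclideanSpace ℝ (Fin m)) (s : ℝ) :
    c • mkPt a s = mkPt (c • a) (c * s) := by
  ext i
  have h : (c • mkPt a s) i = c * mkPt a s i := rfl
  rw [h]
  refine Fin.lastCases ?_ (fun j => ?_) i
  · rw [mkPt_last, mkPt_last]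
  · rw [mkPt_castSucc, mkPt_castSucc]; rfl

lemma inner_mkPt (a b : EuclideanSpace ℝ (Fin m)) (s t : ℝ) :
    ⟪mkPt a s, mkPt b t⟫ = ⟪a, b⟫ + s * t := by
  simp only [PiLp.inner_apply, RCLike.inner_apply, starRingEnd_apply, star_trivial]
  rw [Fin.sum_univ_castSucc]
  simp [mkPt_castSucc, mkPt_last]
  ring

lemma norm_mkPt_le (a : EuclideanSpace ℝ (Fin m)) (t : ℝ) :
    ‖mkPt a t‖ ≤ ‖a‖ + |t| := by
  have h1 : ‖mkPt a t‖ ^ 2 = ‖a‖ ^ 2 + t ^ 2 := by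
    rw [← real_inner_self_eq_norm_sq, ← real_inner_self_eq_norm_sq, inner_mkPt]; ring
  nlinarith [norm_nonneg (mkPt a t), norm_nonneg a, abs_nonneg t, sq_abs t,
    mul_nonneg (norm_nonneg a) (abs_nonneg t)]

end helpers

section proj
variable {E : Type*} [NormedAddCommGroup E] [InnerProductSpace ℝ E]

lemma proj_varineq {K : Set E} (hK : Convex ℝ K) {u p : E} (hp : p ∈ K)
    (hmin : ∀ q ∈ K, dist u p ≤ dist u q) {z : E} (hz : z ∈ K) :
    ⟪u - p, z - p⟫ ≤ 0 := by
  by_contra hcon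
  push_neg at hcon
  have hzp : z - p ≠ 0 := by
    intro h; rw [h, inner_zero_right] at hcon; exact lt_irrefl 0 hcon
  have hzp2 : 0 < ‖z - p‖ ^ 2 := by have := norm_pos_iff.mpr hzp; positivity
  set c : ℝ := ⟪u - p, z - p⟫ with hc
  set θ : ℝ := min 1 (c / ‖z - p‖ ^ 2) with hθ
  have hθpos : 0 < θ := lt_min one_pos (div_pos hcon hzp2)
  have hθ1 : θ ≤ 1 := min_le_left _ _
  have hw : (1 - θ) • p + θ • z ∈ K :=
    hK hp hz (by linarith) hθpos.le (by ring)
  have hweq : (1 - θ) • p + θ • z = p + θ • (z - p) := by module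
  rw [hweq] at hw
  have hd := hmin _ hw
  rw [dist_eq_norm, dist_eq_norm] at hd
  have hexp : ‖u - (p + θ • (z - p))‖ ^ 2
      = ‖u - p‖ ^ 2 - 2 * (θ * c) + θ ^ 2 * ‖z - p‖ ^ 2 := by
    have h1 : u - (p + θ • (z - p)) = (u - p) - θ • (z - p) := by module
    rw [h1, norm_sub_sq_real, real_inner_smul_right, norm_smul, Real.norm_eq_abs,
      mul_pow, sq_abs, ← hc]
  have hsq : ‖u - p‖ ^ 2 ≤ ‖u - (p + θ • (z - p))‖ ^ 2 :=
    pow_le_pow_left₀ (norm_nonneg _) hd 2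
  have hθle : θ * ‖z - p‖ ^ 2 ≤ c := by
    have h2 : θ ≤ c / ‖z - p‖ ^ 2 := min_le_right _ _
    calc θ * ‖z - p‖ ^ 2 ≤ (c / ‖z - p‖ ^ 2) * ‖z - p‖ ^ 2 := by nlinarith
      _ = c := by field_simp
  nlinarith [mul_pos hθpos hcon]

lemma proj_uniq {u p q : E} (h1 : ⟪u - p, q - p⟫ ≤ 0) (h2 : ⟪u - q, p - q⟫ ≤ 0) :
    p = q := by
  have e0 : (q - p : E) = (u - p) - (u - q) := by abel
  have e1 : ⟪q - p, q - p⟫ = ⟪u - p, q - p⟫ - ⟪u - q, q - p⟫ := by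
    calc ⟪q - p, q - p⟫ = ⟪(u - p) - (u - q), q - p⟫ := by rw [← e0]
      _ = ⟪u - p, q - p⟫ - ⟪u - q, q - p⟫ := inner_sub_left _ _ _
  have e2 : ⟪u - q, p - q⟫ = -⟪u - q, q - p⟫ := by
    rw [show p - q = -(q - p) from (neg_sub q p).symm, inner_neg_right]
  have key : ⟪q - p, q - p⟫ ≤ 0 := by rw [e1]; rw [e2] at h2; linarith
  have h3 : q - p = 0 := real_inner_self_nonpos.mp key
  exact (sub_eq_zero.mp h3).symm

lemma proj_lip {a b pa pb : E}
    (i1 : ⟪a - pa, pb - pa⟫ ≤ 0) (i2 : ⟪b - pb, pa - pb⟫ ≤ 0) :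
    ‖pa - pb‖ ≤ ‖a - b‖ := by
  have e1 : ⟪a - b, pa - pb⟫ - ⟪pa - pb, pa - pb⟫ = ⟪(a - pa) - (b - pb), pa - pb⟫ := by
    rw [← inner_sub_left]; congr 1; abel
  have e2 : ⟪(a - pa) - (b - pb), pa - pb⟫
      = -⟪a - pa, pb - pa⟫ - ⟪b - pb, pa - pb⟫ := by
    rw [inner_sub_left, show (pa - pb : E) = -(pb - pa) from (neg_sub pb pa).symm,
      inner_neg_right]
  have hkey : ‖pa - pb‖ ^ 2 ≤ ⟪a - b, pa - pb⟫ := by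
    have h := e1.trans e2
    rw [real_inner_self_eq_norm_sq] at h
    linarith
  rcases eq_or_ne pa pb with h | h
  · simp [h]
  · have hpos : 0 < ‖pa - pb‖ := by
      rw [norm_pos_iff]; exact sub_ne_zero.mpr h
    have hcs := real_inner_le_norm (a - b) (pa - pb)
    nlinarith

end proj

/-- Let `Ω ⊂ ℝ^n` be a bounded convex open set, `Λ ⊂ ℝ^n` a bounded open
uniformly convex set with `C^{1,1}` boundary, and `P` the metric projection onto `cl Λ`.
If `x ∈ ∂Ω`, `y ∈ ∂Λ`, `x ≠ y`, `⟪x - y, z - y⟫ ≤ 0` for all `z ∈ Λ` (so `y = P x`), and the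
half-line `{y + t (x - y)/‖x - y‖ : t ≥ 0}` is disjoint from `Ω`, then `y` belongs to the
boundary, relative to `∂Λ`, of the projection set `P(Ω) ∩ ∂Λ`. -/
theorem mem_relBd_projection_of_tangent_ray
    (m : ℕ) (hm : 1 ≤ m)
    (Ω Λ : Set (EuclideanSpace ℝ (Fin (m + 1))))
    (hΩo : IsOpen Ω) (hΩb : Bornology.IsBounded Ω) (hΩconv : Convex ℝ Ω)
    (hΛo : IsOpen Λ) (hΛb : Bornology.IsBounded Λ) (hΛconv : Convex ℝ Λ)
    (hΛuc : UniformlyConvexC11 Λ)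
    (P : EuclideanSpace ℝ (Fin (m + 1)) → EuclideanSpace ℝ (Fin (m + 1)))
    (hP : ∀ x, P x ∈ closure Λ ∧ ∀ q ∈ closure Λ, dist x (P x) ≤ dist x q)
    (x y : EuclideanSpace ℝ (Fin (m + 1)))
    (hx : x ∈ frontier Ω) (hy : y ∈ frontier Λ) (hxy : x ≠ y)
    (hnormal : ∀ z ∈ Λ, ⟪x - y, z - y⟫ ≤ 0)
    (hray : ∀ t : ℝ, 0 ≤ t → y + t • (‖x - y‖⁻¹ • (x - y)) ∉ Ω) :
    y ∈ relBd Λ (P '' Ω ∩ frontier Λ) := by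
  have hyc : y ∈ closure Λ := frontier_subset_closure hy
  have hclconv : Convex ℝ (closure Λ) := hΛconv.closure
  -- extend hnormal to the closure
  have hnormal' : ∀ z ∈ closure Λ, ⟪x - y, z - y⟫ ≤ 0 := by
    have hcl : closure Λ ⊆ {z | ⟪x - y, z - y⟫ ≤ 0} := by
      apply closure_minimal hnormal
      have hcont : Continuous fun z : EuclideanSpace ℝ (Fin (m+1)) => (⟪x - y, z - y⟫ : ℝ) :=
        continuous_const.inner (continuous_id.sub continuous_const)
      exact isClosed_le hcont continuous_const
    exact fun z hz => hcl hz
  have hxcl : x ∉ closure Λ := by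
    intro h
    have h2 := hnormal' x h
    rw [real_inner_self_nonpos, sub_eq_zero] at h2
    exact hxy h2
  -- variational inequality for P
  have hPvar : ∀ a : EuclideanSpace ℝ (Fin (m + 1)),
      ∀ z ∈ closure Λ, ⟪a - P a, z - P a⟫ ≤ 0 :=
    fun a z hz => proj_varineq hclconv (hP a).1 (hP a).2 hz
  have hPx : P x = y :=
    proj_uniq (hPvar x y hyc) (hnormal' (P x) (hP x).1)
  -- P maps points outside the closure to the frontier
  have hPfr : ∀ a, a ∉ closure Λ → P a ∈ frontier Λ := by
    intro a hacl
    rw [hΛo.frontier_eq]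
    refine ⟨(hP a).1, fun hPaΛ => ?_⟩
    have hane : a - P a ≠ 0 := by
      intro h
      exact hacl ((sub_eq_zero.mp h) ▸ (hP a).1)
    have hd : 0 < ‖a - P a‖ := norm_pos_iff.mpr hane
    obtain ⟨ε, hε, hball⟩ := Metric.isOpen_iff.mp hΛo (P a) hPaΛ
    set θ : ℝ := min (ε / (2 * ‖a - P a‖)) (1/2) with hθdef
    have hθpos : 0 < θ := lt_min (by positivity) (by norm_num)
    have hθhalf : θ ≤ 1/2 := min_le_right _ _
    have hw : P a + θ • (a - P a) ∈ Λ := by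
      apply hball
      rw [mem_ball, dist_eq_norm, add_sub_cancel_left, norm_smul, Real.norm_eq_abs,
        abs_of_pos hθpos]
      have h1 : θ ≤ ε / (2 * ‖a - P a‖) := min_le_left _ _
      calc θ * ‖a - P a‖ ≤ (ε / (2 * ‖a - P a‖)) * ‖a - P a‖ := by nlinarith
        _ = ε / 2 := by field_simp
        _ < ε := by linarith
    have hle := (hP a).2 _ (subset_closure hw)
    rw [dist_eq_norm, dist_eq_norm] at hle
    have heq : a - (P a + θ • (a - P a)) = (1 - θ) • (a - P a) := by module
    rw [heq, norm_smul, Real.norm_eq_abs, abs_of_pos (by linarith : (0:ℝ) < 1 - θ)] at hle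
    nlinarith
  -- unpack uniform convexity at y
  obtain ⟨C₁, C₂, hC₁, hC₂, huc⟩ := hΛuc
  obtain ⟨R, r, ρ, wt, φ, G, hr, hρ, hRy, hballs, hgraph, hgrad, hlip, hconv⟩ := huc y hy
  have hGy := hgrad wt (mem_ball_self hρ)
  have hφc : ContinuousAt φ wt := hGy.differentiableAt.continuousAt
  -- membership criterion
  have hmem : ∀ (a : EuclideanSpace ℝ (Fin m)) (s : ℝ),
      ‖a - wt‖ + |s - φ wt| < r → s < φ a → R.symm (mkPt a s) ∈ Λ := by
    intro a s hballc hlt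
    have h1 : mkPt a s ∈ Metric.ball (R y) r := by
      rw [mem_ball, dist_eq_norm, hRy, mkPt_sub]
      exact lt_of_le_of_lt (norm_mkPt_le _ _) hballc
    have h2 : mkPt a s ∈ (R '' Λ) ∩ Metric.ball (R y) r := by
      rw [hgraph]
      exact ⟨h1, by rw [lastCoord_mkPt, initPt_mkPt]; exact hlt⟩
    obtain ⟨z, hzΛ, hze⟩ := h2.1
    rw [← hze, R.symm_apply_apply]
    exact hzΛ
  -- the normal cone at y is spanned by ν := R.symm (mkPt (-(G wt)) 1)
  have hcone : ∀ v : EuclideanSpace ℝ (Fin (m + 1)),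
      (∀ z ∈ Λ, ⟪v, z - y⟫ ≤ 0) →
      ∃ c : ℝ, 0 ≤ c ∧ v = c • R.symm (mkPt (-(G wt)) 1) := by
    intro v hv
    have hiv : ∀ (a : EuclideanSpace ℝ (Fin m)) (s : ℝ),
        ⟪v, R.symm (mkPt a s) - y⟫
          = ⟪initPt (R v), a - wt⟫ + lastCoord (R v) * (s - φ wt) := by
      intro a s
      have h1 : ⟪v, R.symm (mkPt a s) - y⟫ = ⟪R v, R (R.symm (mkPt a s) - y)⟫ :=
        (R.inner_map_map _ _).symm
      rw [h1, map_sub, R.apply_symm_apply, hRy]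
      conv_lhs => rw [← mkPt_init_last (R v)]
      rw [mkPt_sub, inner_mkPt]
    set vL : ℝ := lastCoord (R v) with hvLdef
    set Vt : EuclideanSpace ℝ (Fin m) := initPt (R v) with hVtdef
    -- vL ≥ 0
    have hvL0 : 0 ≤ vL := by
      have hz : R.symm (mkPt wt (φ wt - r/2)) ∈ Λ := by
        apply hmem
        · simp only [sub_self, norm_zero, zero_add]
          rw [show φ wt - r/2 - φ wt = -(r/2) by ring, abs_neg,
            abs_of_pos (by linarith)]
          linarith
        · linarith
      have h := hv _ hz
      rw [hiv] at h
      simp only [sub_self, inner_zero_right, zero_add] at h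
      nlinarith
    -- tangential components vanish
    have hstep2 : ∀ τ : EuclideanSpace ℝ (Fin m), ⟪Vt, τ⟫ + vL * ⟪G wt, τ⟫ = 0 := by
      intro τ
      rcases eq_or_ne τ 0 with h0 | hτ
      · simp [h0]
      have hτn : 0 < ‖τ‖ := norm_pos_iff.mpr hτ
      obtain ⟨η, hη, hφcont⟩ := Metric.continuousAt_iff.mp hφc (r/4) (by linarith)
      set g : ℝ → ℝ := fun ε => ⟪Vt, τ⟫ * ε + vL * (φ (wt + ε • τ) - φ wt) with hgdef
      set ε₀ : ℝ := min (η / ‖τ‖) ((r/4) / ‖τ‖) with hε₀def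
      have hε₀ : 0 < ε₀ := lt_min (by positivity) (by positivity)
      -- g is ≤ 0 near 0
      have hle : ∀ ε : ℝ, |ε| < ε₀ → g ε ≤ 0 := by
        intro ε hε
        have haw : wt + ε • τ - wt = ε • τ := add_sub_cancel_left _ _
        have hsn : ‖ε • τ‖ = |ε| * ‖τ‖ := by rw [norm_smul, Real.norm_eq_abs]
        have hlη : ‖ε • τ‖ < η := by
          rw [hsn]
          calc |ε| * ‖τ‖ < ε₀ * ‖τ‖ := by exact mul_lt_mul_of_pos_right hε hτn
            _ ≤ (η / ‖τ‖) * ‖τ‖ := by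
                have := min_le_left (η / ‖τ‖) ((r/4) / ‖τ‖); nlinarith
            _ = η := by field_simp
        have hlr : ‖ε • τ‖ < r/4 := by
          rw [hsn]
          calc |ε| * ‖τ‖ < ε₀ * ‖τ‖ := by exact mul_lt_mul_of_pos_right hε hτn
            _ ≤ ((r/4) / ‖τ‖) * ‖τ‖ := by
                have := min_le_right (η / ‖τ‖) ((r/4) / ‖τ‖); nlinarith
            _ = r/4 := by field_simp
        have hφa : |φ (wt + ε • τ) - φ wt| < r/4 := by
          have h := hφcont (show dist (wt + ε • τ) wt < η by
            rw [dist_eq_norm, haw]; exact hlη)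
          rwa [Real.dist_eq] at h
        refine le_of_forall_pos_le_add fun c hc => ?_
        set δ : ℝ := min (r/4) (c / (vL + 1)) with hδdef
        have hvL1 : 0 < vL + 1 := by linarith
        have hδpos : 0 < δ := lt_min (by linarith) (by positivity)
        have hδr : δ ≤ r/4 := min_le_left _ _
        have key : g ε ≤ vL * δ := by
          have hz : R.symm (mkPt (wt + ε • τ) (φ (wt + ε • τ) - δ)) ∈ Λ := by
            apply hmem
            · rw [haw]
              have habs : |φ (wt + ε • τ) - δ - φ wt| ≤ |φ (wt + ε • τ) - φ wt| + δ := by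
                have h1 : φ (wt + ε • τ) - δ - φ wt = (φ (wt + ε • τ) - φ wt) + (-δ) := by
                  ring
                rw [h1]
                calc |(φ (wt + ε • τ) - φ wt) + (-δ)|
                    ≤ |φ (wt + ε • τ) - φ wt| + |(-δ)| := abs_add_le _ _
                  _ = |φ (wt + ε • τ) - φ wt| + δ := by
                      rw [abs_neg, abs_of_pos hδpos]
              have := hlr
              linarith
            · linarith
          have h := hv _ hz
          rw [hiv, haw, real_inner_smul_right] at h
          have hexpand : vL * (φ (wt + ε • τ) - δ - φ wt)
              = vL * (φ (wt + ε • τ) - φ wt) - vL * δ := by ring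
          rw [hexpand] at h
          have hmc : ε * ⟪Vt, τ⟫ = ⟪Vt, τ⟫ * ε := mul_comm _ _
          rw [hgdef]
          simp only []
          linarith
        have hvLδ : vL * δ ≤ c := by
          have hδ2 : δ ≤ c / (vL + 1) := min_le_right _ _
          have h1 : vL * δ ≤ vL * (c / (vL + 1)) := mul_le_mul_of_nonneg_left hδ2 hvL0
          have h2 : vL * (c / (vL + 1)) ≤ c := by
            rw [show vL * (c / (vL + 1)) = (vL * c) / (vL + 1) by ring,
              div_le_iff₀ hvL1]
            nlinarith
          linarith
        linarith
      -- derivative of g at 0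
      have hline : HasDerivAt (fun ε : ℝ => wt + ε • τ) τ 0 := by
        have h := ((hasDerivAt_id (0:ℝ)).smul_const τ).const_add wt
        simpa using h
      have hφd : HasFDerivAt φ (InnerProductSpace.toDual ℝ _ (G wt)) wt :=
        hasGradientAt_iff_hasFDerivAt.mp hGy
      have hcomp : HasDerivAt (fun ε : ℝ => φ (wt + ε • τ)) ⟪G wt, τ⟫ 0 := by
        have h0 : wt + (0:ℝ) • τ = wt := by simp
        rw [← h0] at hφd
        have h := hφd.comp_hasDerivAt 0 hline
        simp only [InnerProductSpace.toDual_apply_apply, h0] at h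
        exact h
      have hg : HasDerivAt g (⟪Vt, τ⟫ + vL * ⟪G wt, τ⟫) 0 := by
        have h1 : HasDerivAt (fun ε : ℝ => ⟪Vt, τ⟫ * ε) ⟪Vt, τ⟫ 0 := by
          simpa using (hasDerivAt_id (0:ℝ)).const_mul (⟪Vt, τ⟫ : ℝ)
        have h2 := (hcomp.sub_const (φ wt)).const_mul vL
        exact h1.add h2
      have hg0 : g 0 = 0 := by simp [hgdef]
      have hmax : IsLocalMax g 0 := by
        have : ∀ᶠ ε in nhds (0:ℝ), g ε ≤ g 0 := by
          filter_upwards [Metric.ball_mem_nhds (0:ℝ) hε₀] with ε hε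
          rw [hg0]
          exact hle ε (by simpa [Real.dist_eq] using hε)
        exact this
      exact hmax.hasDerivAt_eq_zero hg
    -- conclude: Vt = -(vL • G wt)
    have hsum : Vt + vL • G wt = 0 := by
      have hall : ⟪Vt + vL • G wt, Vt + vL • G wt⟫ = 0 := by
        rw [inner_add_left, real_inner_smul_left]
        exact hstep2 _
      exact inner_self_eq_zero.mp hall
    have hVt : Vt = -(vL • G wt) := eq_neg_of_add_eq_zero_left hsum
    have hRv : R v = vL • mkPt (-(G wt)) 1 := by
      rw [mkPt_smul, mul_one, smul_neg]
      rw [← mkPt_init_last (R v)]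
      rw [← hVtdef, ← hvLdef, hVt]
    refine ⟨vL, hvL0, ?_⟩
    have h := congrArg R.symm hRv
    rwa [R.symm_apply_apply, map_smul] at h
  -- the normal direction is the ray through x - y
  obtain ⟨c₁, hc₁0, hc₁⟩ := hcone (x - y) hnormal
  have hxyne : x - y ≠ 0 := sub_ne_zero.mpr hxy
  have hc₁pos : 0 < c₁ := by
    rcases hc₁0.lt_or_eq with h | h
    · exact h
    · exfalso; apply hxyne; rw [hc₁, ← h, zero_smul]
  have hν : R.symm (mkPt (-(G wt)) 1) = c₁⁻¹ • (x - y) := by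
    rw [hc₁, smul_smul, inv_mul_cancel₀ hc₁pos.ne', one_smul]
  -- y is not in the projection of Ω
  have hynotin : y ∉ P '' Ω := by
    rintro ⟨ω, hω, hPω⟩
    by_cases hωcl : ω ∈ closure Λ
    · have h1 := (hP ω).2 ω hωcl
      rw [dist_self] at h1
      have h2 : dist ω (P ω) = 0 := le_antisymm h1 dist_nonneg
      have h3 : ω = P ω := by rwa [dist_eq_zero] at h2
      have h4 : ω = y := h3.trans hPω
      have h5 := hray 0 le_rfl
      rw [zero_smul, add_zero] at h5
      exact h5 (h4 ▸ hω)
    · have hvar : ∀ z ∈ Λ, ⟪ω - y, z - y⟫ ≤ 0 := by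
        intro z hz
        have h := hPvar ω z (subset_closure hz)
        rwa [hPω] at h
      obtain ⟨c₂, hc₂0, hc₂⟩ := hcone (ω - y) hvar
      have hxyn : ‖x - y‖ ≠ 0 := norm_ne_zero_iff.mpr hxyne
      have ht0 : 0 ≤ c₂ * c₁⁻¹ * ‖x - y‖ := by positivity
      have hωeq : ω = y + (c₂ * c₁⁻¹ * ‖x - y‖) • (‖x - y‖⁻¹ • (x - y)) := by
        have h1 : ω - y = (c₂ * c₁⁻¹ * ‖x - y‖) • (‖x - y‖⁻¹ • (x - y)) := by
          rw [hc₂, hν, smul_smul, smul_smul]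
          congr 1
          field_simp
        have h2 := sub_eq_iff_eq_add.mp h1
        rw [h2]; exact add_comm _ _
      exact hray _ ht0 (hωeq ▸ hω)
  -- assemble: y is in the relative boundary
  refine ⟨⟨y, hy⟩, ?_, rfl⟩
  rw [frontier_eq_closure_inter_closure
    (s := (fun y : frontier Λ => (y : EuclideanSpace ℝ (Fin (m + 1)))) ⁻¹'
      (P '' Ω ∩ frontier Λ))]
  constructor
  · -- in the closure of the projection set
    rw [Metric.mem_closure_iff]
    intro ε hε
    have hxΩ : x ∈ closure Ω := frontier_subset_closure hx
    obtain ⟨εΛ, hεΛ, hballΛ⟩ :=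
      Metric.isOpen_iff.mp (isClosed_closure (s := Λ)).isOpen_compl x hxcl
    obtain ⟨ω, hωΩ, hωd⟩ := Metric.mem_closure_iff.mp hxΩ (min ε εΛ)
      (lt_min hε hεΛ)
    have hωcl : ω ∉ closure Λ := by
      apply hballΛ
      rw [mem_ball, dist_comm]
      exact lt_of_lt_of_le hωd (min_le_right _ _)
    refine ⟨⟨P ω, hPfr ω hωcl⟩, ⟨⟨ω, hωΩ, rfl⟩, hPfr ω hωcl⟩, ?_⟩
    rw [Subtype.dist_eq]
    have hlipP : ‖P x - P ω‖ ≤ ‖x - ω‖ :=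
      proj_lip (hPvar x (P ω) (hP ω).1) (hPvar ω (P x) (hP x).1)
    calc dist y (P ω) = ‖P x - P ω‖ := by rw [← hPx, dist_eq_norm]
      _ ≤ ‖x - ω‖ := hlipP
      _ = dist x ω := (dist_eq_norm _ _).symm
      _ < ε := lt_of_lt_of_le hωd (min_le_left _ _)
  · -- in the closure of the complement
    apply subset_closure
    intro h
    exact hynotin h.1
end

section
/- Let Ω, Λ ⊂ ℝ^n be sets, and let x₀, y₀ ∈ ℝ^n with x₀ ≠ y₀ satisfy ⟨y₀ − x₀, z − x₀⟩ ≤ 0 for all z ∈ Ω and ⟨x₀ − y₀, z − y₀⟩ ≤ 0 for all z ∈ Λ. Let H := {z ∈ ℝ^n : ⟨x₀ − y₀, z − y₀⟩ = 0} be the hyperplane through y₀ orthogonal to x₀ − y₀. Then for every x₁ ∈ cl Ω and every y₁ ∈ cl Λ one has |x₁ − y₁| ≥ |x₀ − y₀| + dist(y₁, H). -/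
open Set Metric RealInnerProductSpace

/-- If `x₀ ≠ y₀`, `y₀ - x₀` is an outward normal direction to `Ω` at `x₀`
and `x₀ - y₀` is an outward normal direction to `Λ` at `y₀`, and `H` is the hyperplane through
`y₀` orthogonal to `x₀ - y₀`, then for every `x₁ ∈ cl Ω` and `y₁ ∈ cl Λ` one has
`|x₁ - y₁| ≥ |x₀ - y₀| + dist(y₁, H)`. -/
theorem dist_ge_of_separating_normals
    (n : ℕ) (Ω Λ : Set (EuclideanSpace ℝ (Fin n)))
    (x₀ y₀ : EuclideanSpace ℝ (Fin n)) (hne : x₀ ≠ y₀)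
    (hx : ∀ z ∈ Ω, ⟪y₀ - x₀, z - x₀⟫ ≤ 0)
    (hy : ∀ z ∈ Λ, ⟪x₀ - y₀, z - y₀⟫ ≤ 0) :
    ∀ x₁ ∈ closure Ω, ∀ y₁ ∈ closure Λ,
      ‖x₁ - y₁‖ ≥ ‖x₀ - y₀‖ +
        Metric.infDist y₁ {z | ⟪x₀ - y₀, z - y₀⟫ = 0} := by
  intro x₁ hx₁ y₁ hy₁
  set v := x₀ - y₀ with hv
  have hd : 0 < ‖v‖ := by
    rw [norm_pos_iff]
    exact sub_ne_zero.2 hne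
  -- extend inequalities to closures
  have hcont : Continuous fun z : EuclideanSpace ℝ (Fin n) => ⟪y₀ - x₀, z - x₀⟫ :=
    Continuous.inner continuous_const (continuous_id.sub continuous_const)
  have hcont' : Continuous fun z : EuclideanSpace ℝ (Fin n) => ⟪v, z - y₀⟫ :=
    Continuous.inner continuous_const (continuous_id.sub continuous_const)
  have hx1 : ⟪y₀ - x₀, x₁ - x₀⟫ ≤ 0 := by
    have hcl : IsClosed {z : EuclideanSpace ℝ (Fin n) | ⟪y₀ - x₀, z - x₀⟫ ≤ 0} :=
      isClosed_le hcont continuous_const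
    exact hcl.closure_subset_iff.2 (fun z hz => hx z hz) hx₁
  have hy1 : ⟪v, y₁ - y₀⟫ ≤ 0 := by
    have hcl : IsClosed {z : EuclideanSpace ℝ (Fin n) | ⟪v, z - y₀⟫ ≤ 0} :=
      isClosed_le hcont' continuous_const
    exact hcl.closure_subset_iff.2 (fun z hz => hy z hz) hy₁
  set t : ℝ := ⟪v, y₁ - y₀⟫ with ht
  -- bound infDist by distance to the orthogonal projection
  set p : EuclideanSpace ℝ (Fin n) := y₁ - (t / ‖v‖ ^ 2) • v with hp
  have hpmem : p ∈ {z : EuclideanSpace ℝ (Fin n) | ⟪v, z - y₀⟫ = 0} := by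
    have : ⟪v, p - y₀⟫ = t - (t / ‖v‖ ^ 2) * ⟪v, v⟫ := by
      simp [hp, sub_right_comm, inner_sub_right, inner_smul_right, ht]
    rw [Set.mem_setOf_eq, this, real_inner_self_eq_norm_sq]
    field_simp
    ring
  have hinf : Metric.infDist y₁ {z : EuclideanSpace ℝ (Fin n) | ⟪v, z - y₀⟫ = 0}
      ≤ -t / ‖v‖ := by
    have h1 := Metric.infDist_le_dist_of_mem (x := y₁) hpmem
    have h2 : dist y₁ p = -t / ‖v‖ := by
      rw [dist_eq_norm]
      have : y₁ - p = (t / ‖v‖ ^ 2) • v := by simp [hp]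
      rw [this, norm_smul]
      rw [Real.norm_eq_abs, abs_of_nonpos (div_nonpos_of_nonpos_of_nonneg hy1 (by positivity))]
      field_simp
    linarith [h1, h2.le, h2.ge]
  -- key inner product inequality
  have hkey : ‖v‖ ^ 2 - t ≤ ⟪v, x₁ - y₁⟫ := by
    have hsplit : ⟪v, x₁ - y₁⟫ = ⟪v, x₁ - x₀⟫ + ⟪v, x₀ - y₀⟫ + ⟪v, y₀ - y₁⟫ := by
      rw [← inner_add_right, ← inner_add_right]
      congr 1
      abel
    have h1 : ⟪v, x₁ - x₀⟫ = -⟪y₀ - x₀, x₁ - x₀⟫ := by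
      rw [hv, ← neg_sub y₀ x₀, inner_neg_left]
    have h2 : ⟪v, x₀ - y₀⟫ = ‖v‖ ^ 2 := by
      rw [← hv, real_inner_self_eq_norm_sq]
    have h3 : ⟪v, y₀ - y₁⟫ = -t := by
      rw [ht, ← inner_neg_right]
      congr 1
      abel
    rw [hsplit, h1, h2, h3]
    linarith
  have hcs : ⟪v, x₁ - y₁⟫ ≤ ‖v‖ * ‖x₁ - y₁‖ := real_inner_le_norm v (x₁ - y₁)
  have hfin : ‖v‖ * ‖x₁ - y₁‖ ≥ ‖v‖ ^ 2 - t := le_trans hkey hcs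
  rw [ge_iff_le]
  have : ‖v‖ + -t / ‖v‖ ≤ ‖x₁ - y₁‖ := by
    rw [← sub_nonneg]
    have : ‖x₁ - y₁‖ - (‖v‖ + -t / ‖v‖) = (‖v‖ * ‖x₁ - y₁‖ - (‖v‖ ^ 2 - t)) / ‖v‖ := by
      field_simp
      ring
    rw [this]
    apply div_nonneg _ hd.le
    linarith
  linarith [hinf, this]
end
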